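/- arXiv:0803.4439 — 2 statements merged into one kernel-verified Lean document; each statement's English description precedes it below -/
import Mathlib

section
/- Let β ∈ (1,2) and m ≥ 1. Suppose the trapezoidal map T_β has a periodic point x of smallest period m whose entire orbit {x, T_β(x), …, T_β^{m−1}(x)} is disjoint from C = [1/β, 1/(β(β−1))]. Then for every k with m ▷ k in the Sharkovskii ordering, T_β has a periodic point of smallest period k whose entire orbit is disjoint from C. -/
/-- A 0-1 sequence: all values are at most 1. Index `k` corresponds to `ε_{k+1}` in the paper. -/
def isSeq (ε : ℕ → ℕ) : Prop := ∀ k, ε k ≤ 1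

/-- The shift map σ. -/
def shift (ε : ℕ → ℕ) : ℕ → ℕ := fun n => ε (n + 1)

/-- The mirror image ε̄, (ε̄)_n = 1 - ε_n. -/
def mirror (ε : ℕ → ℕ) : ℕ → ℕ := fun n => 1 - ε n

/-- Strict lexicographic order on sequences. -/
def lexLt (a b : ℕ → ℕ) : Prop := ∃ k, (∀ j, j < k → a j = b j) ∧ a k < b k

/-- Non-strict lexicographic order. -/
def lexLe (a b : ℕ → ℕ) : Prop := lexLt a b ∨ a = b

/-- ε is periodic with smallest period n ≥ 1. -/
def periodicSmallest (n : ℕ) (ε : ℕ → ℕ) : Prop :=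
  1 ≤ n ∧ shift^[n] ε = ε ∧ ∀ j, 1 ≤ j → j < n → shift^[j] ε ≠ ε

/-- k ▷ m in the Sharkovskii ordering: k comes before m. -/
def sharkGt (k m : ℕ) : Prop :=
  ∃ i p j q : ℕ, k = 2 ^ i * (2 * p + 1) ∧ m = 2 ^ j * (2 * q + 1) ∧
    ((1 ≤ p ∧ 1 ≤ q ∧ i < j) ∨ (1 ≤ p ∧ 1 ≤ q ∧ i = j ∧ p < q) ∨
     (1 ≤ p ∧ q = 0) ∨ (p = 0 ∧ q = 0 ∧ j < i))

/-- The interval I_β = [0, 1/(β-1)]. -/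
def Iset (β : ℝ) : Set ℝ := Set.Icc 0 (1 / (β - 1))

/-- The trapezoidal map T_β. -/
noncomputable def Tmap (β : ℝ) : ℝ → ℝ := fun x =>
  if x < 1 / β then β * x
  else if x ≤ 1 / (β * (β - 1)) then 1
  else β / (β - 1) - β * x

/-- The middle interval C = [1/β, 1/(β(β-1))]. -/
def Cset (β : ℝ) : Set ℝ := Set.Icc (1 / β) (1 / (β * (β - 1)))

/-!
A point whose orbit avoids `C` is coded by its itinerary, the sequence of sides of `C` visited by
its orbit. Both branches of `T_β` expand by `β`, so pulling back along an itinerary converges to a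
point, which realizes the itinerary as soon as the points coded by all its shifts lie in `[0, 1)`,
hence off `C`; for the kneading order (lexicographic after taking cumulative parities, because the
right branch reverses orientation) this coding is strictly monotone. Hence the largest point of an `L-R` cycle of least period `m` has a shift-maximal
itinerary `ν` of least period `m`, and it suffices to find, for `m ▷ k`, an itinerary of least
period `k` all of whose shifts lie below `ν`. This goes by induction on `m`: if `ν` is a
renormalization `1 μ̄₀ 1 μ̄₁ ⋯` one passes to `μ`, halving `m` and `k`; otherwise `ν` lies above
Štefan's itinerary `1 0 1 ⋯ 1` of every period exceeding `m`, hence above every renormalization,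
and these provide cycles of every period that `m` precedes.
-/

/-! ### Arithmetic of the Sharkovskii order -/

lemma sharkGt.pos_left {m k : ℕ} (h : sharkGt m k) : 0 < m := by
  obtain ⟨i, p, j, q, rfl, -, -⟩ := h
  positivity

lemma not_sharkGt_one (k : ℕ) : ¬ sharkGt 1 k := by
  rintro ⟨i, p, j, q, h1, -, hcase⟩
  have hi : i = 0 := by simpa using Nat.eq_one_of_mul_eq_one_right h1.symm
  subst hi
  omega

lemma sharkGt.half {m k : ℕ} (h : sharkGt m k) (hm : Even m) (hk : k ≠ 1) :
    Even k ∧ sharkGt (m / 2) (k / 2) := by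
  obtain ⟨i, p, j, q, rfl, rfl, hcase⟩ := h
  obtain ⟨i, rfl⟩ : ∃ i', i = i' + 1 := Nat.exists_eq_add_one.2 <| Nat.pos_of_ne_zero <| by
    rintro rfl
    simp at hm
  obtain ⟨j, rfl⟩ : ∃ j', j = j' + 1 := Nat.exists_eq_add_one.2 <| Nat.pos_of_ne_zero <| by
    rintro rfl
    simp only [pow_zero, one_mul] at hk
    omega
  simp only [pow_succ, mul_comm _ 2, mul_assoc, even_two_mul, true_and,
    Nat.mul_div_cancel_left _ two_pos]
  exact ⟨i, p, j, q, rfl, rfl, by omega⟩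

lemma sharkGt.lt_of_odd {m k : ℕ} (h : sharkGt m k) (hk : Odd k) (hk1 : k ≠ 1) : m < k := by
  obtain ⟨i, p, j, q, rfl, rfl, hcase⟩ := h
  obtain rfl : j = 0 := by
    by_contra hj
    obtain ⟨j, rfl⟩ := Nat.exists_eq_add_one.2 (Nat.pos_of_ne_zero hj)
    rw [pow_succ, mul_comm _ 2, mul_assoc] at hk
    exact Nat.not_odd_iff_even.2 (even_two_mul _) hk
  rcases hcase with ⟨-, -, hij⟩ | ⟨-, -, rfl, hpq⟩ | ⟨-, rfl⟩ | ⟨-, rfl, -⟩ <;> simp_all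

/-! ### The kneading order on itineraries -/

/-- Itineraries: `true` records a visit to the right of `C`, where `T_β` is decreasing. -/
def Itin : Type := ℕ → Bool

namespace Itin

def drop (n : ℕ) (e : Itin) : Itin := fun j => e (j + n)

@[simp] lemma drop_apply (n : ℕ) (e : Itin) (j : ℕ) : drop n e j = e (j + n) := rfl

@[simp] lemma drop_zero (e : Itin) : drop 0 e = e := rfl

@[simp] lemma drop_drop (m n : ℕ) (e : Itin) : drop n (drop m e) = drop (m + n) e := by
  funext j; simp [Nat.add_assoc, Nat.add_comm n m]

lemma drop_eq_self_iff {s : ℕ} {e : Itin} : drop s e = e ↔ Function.Periodic e s :=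
  funext_iff

def parity (e : Itin) : ℕ → Bool
  | 0 => false
  | t + 1 => xor (parity e t) (e t)

lemma parity_congr {a b : Itin} {t : ℕ} (h : ∀ s < t, a s = b s) : parity a t = parity b t := by
  induction t with
  | zero => rfl
  | succ t ih =>
    simp only [parity, ih fun s hs => h s (by omega), h t (by omega)]

lemma forall_lt_eq_iff_parity {a b : Itin} {t : ℕ} :
    (∀ s < t, a s = b s) ↔ ∀ s < t, parity a (s + 1) = parity b (s + 1) := by
  induction t with
  | zero => simp
  | succ t ih =>
    simp only [Nat.lt_succ_iff_lt_or_eq, or_imp, forall_and, forall_eq, ih]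
    refine and_congr_right fun h => ?_
    have hpar : parity a t = parity b t := by
      cases t with
      | zero => rfl
      | succ t => exact h t (by omega)
    simp only [parity, hpar, Bool.xor_right_inj]

lemma parity_succ_injective : Function.Injective fun (e : Itin) t => parity e (t + 1) := by
  intro a b h
  funext t
  exact forall_lt_eq_iff_parity.2 (fun s _ => congrFun h s) t (Nat.lt_succ_self t)

/-- The kneading order: cumulative parities are compared lexicographically, since every visit to
the right branch reverses the orientation of `T_β`. -/
noncomputable instance : LinearOrder Itin :=
  LinearOrder.lift' (fun e => toLex fun t => parity e (t + 1)) parity_succ_injective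

lemma lt_iff {a b : Itin} :
    a < b ↔ ∃ t, (∀ s < t, a s = b s) ∧ a t ≠ b t ∧ a t = parity a t := by
  change (∃ t, (∀ s < t, parity a (s + 1) = parity b (s + 1)) ∧
    parity a (t + 1) < parity b (t + 1)) ↔ _
  refine exists_congr fun t => ?_
  rw [← forall_lt_eq_iff_parity]
  refine and_congr_right fun h => ?_
  simp only [parity, parity_congr h]
  cases parity b t <;> cases a t <;> cases b t <;> decide

lemma lt_of_apply_zero {a b : Itin} (ha : a 0 = false) (hb : b 0 = true) : a < b :=
  lt_iff.2 ⟨0, by simp, by simp [ha, hb], by simp [ha, parity]⟩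

lemma lt_of_apply_one {a b : Itin} (ha0 : a 0 = true) (hb0 : b 0 = true) (ha1 : a 1 = true)
    (hb1 : b 1 = false) : a < b := by
  refine lt_iff.2 ⟨1, fun s hs => ?_, by simp [ha1, hb1], by simp [ha0, ha1, parity]⟩
  obtain rfl : s = 0 := by omega
  rw [ha0, hb0]

lemma lt_of_head {a w : Itin} (hw0 : w 0 = true) (hw1 : w 1 = false)
    (ha : a 0 = false ∨ a 1 = true) : a < w := by
  cases ha0 : a 0
  · exact lt_of_apply_zero ha0 hw0
  · exact lt_of_apply_one ha0 hw0 (ha.resolve_left (by simp [ha0])) hw1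

lemma parity_of_gap {a : Itin} {p : ℕ} (hp : 2 ≤ p) (h0 : a 0 = true) (h1 : a 1 = false)
    (hmid : ∀ s, 2 ≤ s → s < p → a s = true) : parity a p = decide (Even p) := by
  induction p, hp using Nat.le_induction with
  | base => simp [parity, h0, h1]
  | succ p hp ih =>
    rw [parity, ih fun s h2 hs => hmid s h2 (by omega), hmid p hp (by omega)]
    simp [Nat.even_add_one, -Nat.not_even_iff_odd]

lemma lt_of_gap {a b : Itin} {p : ℕ} (hp : 2 ≤ p) (h0 : a 0 = true) (h1 : a 1 = false)
    (hmid : ∀ s, 2 ≤ s → s < p → a s = true) (hab : ∀ s < p, a s = b s) (hne : a p ≠ b p)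
    (hpar : a p = decide (Even p)) : a < b :=
  lt_iff.2 ⟨p, hab, hne, hpar.trans (parity_of_gap hp h0 h1 hmid).symm⟩

def SecondZeroAt (a : Itin) (p : ℕ) : Prop :=
  a 0 = true ∧ a 1 = false ∧ 2 ≤ p ∧ (∀ s, 2 ≤ s → s < p → a s = true) ∧ a p = false

lemma SecondZeroAt.lt {a b : Itin} {p q : ℕ} (ha : SecondZeroAt a p) (hb : SecondZeroAt b q)
    (h : p < q ∧ Odd p ∨ q < p ∧ Even q) : a < b := by
  obtain ⟨ha0, ha1, hp, hamid, hap⟩ := ha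
  obtain ⟨hb0, hb1, hq, hbmid, hbq⟩ := hb
  have hagree : ∀ s, s < p → s < q → a s = b s := fun s hsp hsq => by
    rcases (by omega : s = 0 ∨ s = 1 ∨ 2 ≤ s) with rfl | rfl | hs
    · rw [ha0, hb0]
    · rw [ha1, hb1]
    · rw [hamid s hs hsp, hbmid s hs hsq]
  rcases h with ⟨hpq, hodd⟩ | ⟨hqp, heven⟩
  · refine lt_of_gap hp ha0 ha1 hamid (fun s hs => hagree s hs (by omega)) ?_ ?_
    · rw [hap, hbmid p hp hpq]; decide
    · simp [hap, Nat.not_even_iff_odd.2 hodd]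
  · refine lt_of_gap hq ha0 ha1 (fun s h2 hs => hamid s h2 (by omega))
      (fun s hs => hagree s (by omega) hs) ?_ ?_
    · rw [hamid q hq hqp, hbq]; decide
    · simp [hamid q hq hqp, heven]

def ShiftLe (ζ ν : Itin) : Prop := ∀ n, drop n ζ ≤ ν

lemma ShiftLe.trans_le {ζ ν ν' : Itin} (h : ShiftLe ζ ν) (h' : ν ≤ ν') : ShiftLe ζ ν' :=
  fun n => (h n).trans h'

lemma head_of_shiftLe_self {ν : Itin} (hν : ShiftLe ν ν) (hnc : ¬ Function.Periodic ν 1) :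
    ν 0 = true ∧ ν 1 = false := by
  have hex : ∀ b : Bool, ∃ w, ν w = b := fun b => by
    by_contra! h
    exact hnc fun n => by
      cases b <;> simp only [ne_eq, Bool.not_eq_false, Bool.not_eq_true] at h <;> rw [h, h]
  have h0 : ν 0 = true := by
    by_contra h0
    obtain ⟨w, hw⟩ := hex true
    exact (hν w).not_gt (lt_of_apply_zero (by simpa using h0) (by simpa using hw))
  refine ⟨h0, ?_⟩
  by_contra h1
  classical
  let n := Nat.find (hex false)
  have hn : ν n = false := Nat.find_spec (hex false)
  have hlt : ∀ s < n, ν s = true := fun s hs => by simpa using Nat.find_min (hex false) hs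
  have h2n : 2 ≤ n := by
    by_contra
    interval_cases h : n <;> simp_all
  refine (hν (n - 1)).not_gt (lt_of_apply_one h0 (hlt _ (by omega)) (by simpa using h1) ?_)
  simpa [show 1 + (n - 1) = n by omega] using hn

def IsLeastPeriod (k : ℕ) (e : Itin) : Prop :=
  0 < k ∧ Function.Periodic e k ∧ ∀ s, 0 < s → s < k → ¬ Function.Periodic e s

lemma periodic_drop {s : ℕ} {e : Itin} (h : Function.Periodic e s) (n : ℕ) :
    Function.Periodic (drop n e) s := fun j => by
  simp only [drop_apply, Nat.add_right_comm j s n, h _]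

lemma IsLeastPeriod.drop {k : ℕ} {e : Itin} (h : IsLeastPeriod k e) (n : ℕ) :
    IsLeastPeriod k (drop n e) := by
  have hback : Itin.drop (n * k - n) (Itin.drop n e) = e := by
    rw [drop_drop, Nat.add_sub_cancel' (Nat.le_mul_of_pos_right n h.1), drop_eq_self_iff]
    exact_mod_cast h.2.1.nat_mul n
  exact ⟨h.1, periodic_drop h.2.1 n,
    fun s hs hsk hper => h.2.2 s hs hsk (hback ▸ periodic_drop hper _)⟩

/-! ### Renormalization and Štefan itineraries -/

/-- Renormalization, `double e = 1 ē₀ 1 ē₁ 1 ē₂ ⋯`: it doubles periods. -/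
def double (e : Itin) : Itin := fun n => if Even n then true else !e (n / 2)

@[simp] lemma double_two_mul (e : Itin) (n : ℕ) : double e (2 * n) = true := by
  simp [double]

@[simp] lemma double_two_mul_add_one (e : Itin) (n : ℕ) : double e (2 * n + 1) = !e n := by
  simp [double, show (2 * n + 1) / 2 = n by omega]

lemma drop_two_mul_double (e : Itin) (n : ℕ) : drop (2 * n) (double e) = double (drop n e) := by
  funext j
  obtain ⟨u, rfl | rfl⟩ := Nat.even_or_odd' j
  · simp [← mul_add]
  · simp [show 2 * u + 1 + 2 * n = 2 * (u + n) + 1 by ring]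

lemma parity_double_two_mul (e : Itin) (t : ℕ) : parity (double e) (2 * t) = parity e t := by
  induction t with
  | zero => rfl
  | succ t ih =>
    rw [show 2 * (t + 1) = 2 * t + 1 + 1 by ring]
    simp only [parity, ih, double_two_mul, double_two_mul_add_one]
    cases parity e t <;> cases e t <;> rfl

lemma strictMono_double : StrictMono double := by
  intro a b h
  obtain ⟨t, hagree, hne, hpar⟩ := lt_iff.1 h
  refine lt_iff.2 ⟨2 * t + 1, fun s hs => ?_, by simpa using hne, ?_⟩
  · obtain ⟨u, rfl | rfl⟩ := Nat.even_or_odd' s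
    · simp
    · simp [hagree u (by omega)]
  · simp [parity, parity_double_two_mul, hpar]

lemma periodic_double_iff {e : Itin} {c : ℕ} :
    Function.Periodic (double e) (2 * c) ↔ Function.Periodic e c := by
  refine ⟨fun h n => ?_, fun h n => ?_⟩
  · simpa [show 2 * n + 1 + 2 * c = 2 * (n + c) + 1 by ring] using h (2 * n + 1)
  · obtain ⟨u, rfl | rfl⟩ := Nat.even_or_odd' n
    · simp [← mul_add]
    · simp [show 2 * u + 1 + 2 * c = 2 * (u + c) + 1 by ring, h u]

lemma IsLeastPeriod.double {c : ℕ} {e : Itin} (h : IsLeastPeriod c e) (he : e 0 = true) :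
    IsLeastPeriod (2 * c) (Itin.double e) := by
  refine ⟨by have := h.1; omega, periodic_double_iff.2 h.2.1, fun s hs hsc hper => ?_⟩
  obtain ⟨s, rfl | rfl⟩ := Nat.even_or_odd' s
  · exact h.2.2 s (by omega) (by omega) (periodic_double_iff.1 hper)
  · have := hper 1
    rw [show 1 + (2 * s + 1) = 2 * (s + 1) by ring, double_two_mul,
      show (1 : ℕ) = 2 * 0 + 1 from rfl, double_two_mul_add_one, he] at this
    exact Bool.noConfusion this

lemma IsLeastPeriod.of_double {c : ℕ} {e : Itin} (h : IsLeastPeriod (2 * c) (Itin.double e)) :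
    IsLeastPeriod c e :=
  ⟨by have := h.1; omega, periodic_double_iff.1 h.2.1,
    fun s hs hsc hper => h.2.2 (2 * s) (by omega) (by omega) (periodic_double_iff.2 hper)⟩

def undouble (ν : Itin) : Itin := fun n => !ν (2 * n + 1)

lemma double_undouble {ν : Itin} (h : ∀ n, ν (2 * n) = true) : double (undouble ν) = ν := by
  funext j
  obtain ⟨u, rfl | rfl⟩ := Nat.even_or_odd' j
  · rw [double_two_mul, h]
  · simp [undouble]

lemma ShiftLe.double {a b : Itin} (h : ShiftLe a b) (hb : b 0 = true) :
    ShiftLe (Itin.double a) (Itin.double b) := by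
  intro n
  obtain ⟨u, rfl | rfl⟩ := Nat.even_or_odd' n
  · rw [drop_two_mul_double]
    exact strictMono_double.monotone (h u)
  · refine (lt_of_head (by simpa using double_two_mul b 0)
      (by simpa [hb] using double_two_mul_add_one b 0) ?_).le
    simp only [drop_apply, show 1 + (2 * u + 1) = 2 * (u + 1) by ring, double_two_mul,
      or_true]

lemma ShiftLe.of_double {a b : Itin} (h : ShiftLe (Itin.double a) (Itin.double b)) :
    ShiftLe a b :=
  fun n => strictMono_double.le_iff_le.1 (drop_two_mul_double a n ▸ h (2 * n))

/-- The itinerary `1 0 1 ⋯ 1`, repeated with period `N`, of a Štefan cycle. -/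
def stefan (N : ℕ) : Itin := fun n => decide (n % N ≠ 1)

lemma stefan_apply_zero (N : ℕ) : stefan N 0 = true := by simp [stefan]

lemma stefan_apply_one {N : ℕ} (hN : 2 ≤ N) : stefan N 1 = false := by
  simp [stefan, Nat.mod_eq_of_lt hN]

lemma stefan_apply_of_le {N t : ℕ} (ht : 2 ≤ t) (htN : t ≤ N) : stefan N t = true := by
  rcases htN.lt_or_eq with htN | rfl
  · simp [stefan, Nat.mod_eq_of_lt htN]; omega
  · simp [stefan]

lemma periodic_stefan (N : ℕ) : Function.Periodic (stefan N) N := by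
  intro n; simp [stefan]

lemma secondZeroAt_stefan {N : ℕ} (hN : 2 ≤ N) : SecondZeroAt (stefan N) (N + 1) := by
  refine ⟨stefan_apply_zero N, stefan_apply_one hN, by omega,
    fun s hs hsN => stefan_apply_of_le hs (by omega), ?_⟩
  rw [add_comm, periodic_stefan N 1, stefan_apply_one hN]

lemma isLeastPeriod_stefan {N : ℕ} (hN : 0 < N) : IsLeastPeriod N (stefan N) := by
  refine ⟨hN, periodic_stefan N, fun s hs hsN hper => ?_⟩
  have := hper 1
  rw [stefan_apply_one (by omega), stefan_apply_of_le (by omega) (by omega)] at this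
  exact Bool.noConfusion this

lemma shiftLe_stefan {N : ℕ} (hN : 0 < N) : ShiftLe (stefan N) (stefan N) := by
  intro n
  have hmod : drop n (stefan N) = drop (n % N) (stefan N) := by
    funext j
    simp only [drop_apply]
    rw [← (periodic_stefan N).map_mod_nat (j + n), ← (periodic_stefan N).map_mod_nat (j + n % N),
      Nat.add_mod_mod]
  have hr := Nat.mod_lt n hN
  rw [hmod]
  rcases (by omega : n % N = 0 ∨ n % N = 1 ∨ 2 ≤ n % N) with h | h | h
  · rw [h, drop_zero]
  · refine (lt_of_apply_zero ?_ (stefan_apply_zero N)).le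
    simp [h, stefan_apply_one (show 2 ≤ N by omega)]
  · refine (lt_of_head (stefan_apply_zero N) (stefan_apply_one (by omega)) (Or.inr ?_)).le
    simp only [drop_apply]
    exact stefan_apply_of_le (by omega) (by omega)

lemma double_apply_of_even (e : Itin) {p : ℕ} (hp : Even p) : double e p = true := by
  simp [double, hp]

lemma double_lt_stefan (e : Itin) {N : ℕ} (hN : Odd N) (h3 : 3 ≤ N) : double e < stefan N := by
  have hN2 : 2 ≤ N := by omega
  cases he : e 0
  · refine lt_of_head (stefan_apply_zero N) (stefan_apply_one hN2) (Or.inr ?_)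
    simpa [he] using double_two_mul_add_one e 0
  have h0 : double e 0 = true := by simpa using double_two_mul e 0
  have h1 : double e 1 = false := by simpa [he] using double_two_mul_add_one e 0
  have hagree : ∀ p, (∀ s, 2 ≤ s → s < p → double e s = true) → p ≤ N + 1 →
      ∀ s < p, double e s = stefan N s := fun p hmid hpN s hs => by
    rcases (by omega : s = 0 ∨ s = 1 ∨ 2 ≤ s) with rfl | rfl | h2
    · rw [h0, stefan_apply_zero]
    · rw [h1, stefan_apply_one hN2]
    · rw [hmid s h2 hs, stefan_apply_of_le h2 (by omega)]
  classical
  by_cases hex : ∃ p, 2 ≤ p ∧ p ≤ N ∧ double e p = false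
  · obtain ⟨hp2, hpN, hp⟩ := Nat.find_spec hex
    have hmid : ∀ s, 2 ≤ s → s < Nat.find hex → double e s = true := fun s h2 hs => by
      simpa [h2, (Nat.find_spec hex).2.1.trans' hs.le] using Nat.find_min hex hs
    have hodd : ¬ Even (Nat.find hex) := fun h => by simp [double_apply_of_even e h] at hp
    refine lt_of_gap hp2 h0 h1 hmid (hagree _ hmid (by omega)) ?_ (by simp [hp, hodd])
    rw [hp, stefan_apply_of_le hp2 hpN]
    decide
  · push Not at hex
    have hmid : ∀ s, 2 ≤ s → s < N + 1 → double e s = true := fun s h2 hs => by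
      simpa using hex s h2 (by omega)
    have heven : Even (N + 1) := hN.add_one
    refine lt_of_gap (by omega) h0 h1 hmid (hagree _ hmid le_rfl) ?_
      (by simp [double_apply_of_even e heven, heven])
    rw [double_apply_of_even e heven, (secondZeroAt_stefan hN2).2.2.2.2]
    decide

/-- Were the second `0` at an odd index, the last `0` before the first even-indexed `0` of `ν`
would start a shift above `ν`. -/
lemma even_of_secondZeroAt {ν : Itin} {t : ℕ} (hν : ShiftLe ν ν) (ht : SecondZeroAt ν t)
    (hD : ∃ n, ν (2 * n) = false) : Even t := by
  classical
  by_contra htodd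
  rw [Nat.not_even_iff_odd] at htodd
  set n := Nat.find hD
  have hn : ν (2 * n) = false := Nat.find_spec hD
  have hlt : ∀ i < n, ν (2 * i) = true := fun i hi => by simpa using Nat.find_min hD hi
  have hn0 : 0 < n := Nat.pos_of_ne_zero fun h0 => by simp [h0, ht.1] at hn
  set z := Nat.findGreatest (fun z => ν z = false) (2 * n - 1)
  have hz1 : 1 ≤ z := Nat.le_findGreatest (by omega) ht.2.1
  have hz : ν z = false :=
    Nat.findGreatest_spec (P := fun z => ν z = false) (m := 1) (by omega) ht.2.1
  have hzle : z ≤ 2 * n - 1 := Nat.findGreatest_le _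
  have hzodd : z % 2 = 1 := by
    by_contra h
    have := hlt (z / 2) (by omega)
    rw [show 2 * (z / 2) = z by omega, hz] at this
    exact Bool.noConfusion this
  have hu : SecondZeroAt (drop (z - 1) ν) (2 * n - z + 1) := by
    refine ⟨?_, ?_, by omega, fun s hs2 hs => ?_, ?_⟩ <;> simp only [drop_apply]
    · rcases (by omega : z = 1 ∨ 2 ≤ z) with hz1 | hz2
      · simpa [hz1] using ht.1
      · rw [show 0 + (z - 1) = 2 * ((z - 1) / 2) by omega]
        exact hlt _ (by omega)
    · rwa [show 1 + (z - 1) = z by omega]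
    · simpa using Nat.findGreatest_is_greatest (P := fun z => ν z = false) (by omega)
        (show s + (z - 1) ≤ 2 * n - 1 by omega)
    · rwa [show 2 * n - z + 1 + (z - 1) = 2 * n by omega]
  refine (hν (z - 1)).not_gt (ht.lt hu ?_)
  have := Nat.odd_iff.1 htodd
  rcases (by omega : t < 2 * n - z + 1 ∨ 2 * n - z + 1 < t) with h | h
  · exact Or.inl ⟨h, htodd⟩
  · exact Or.inr ⟨h, Nat.even_iff.2 (by omega)⟩

lemma stefan_lt {ν : Itin} {m N : ℕ} (hν : ShiftLe ν ν) (h0 : ν 0 = true) (h1 : ν 1 = false)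
    (hper : Function.Periodic ν m) (hm : 0 < m) (hD : ∃ n, ν (2 * n) = false)
    (hmN : m < N) : stefan N < ν := by
  classical
  have hex : ∃ t, 2 ≤ t ∧ ν t = false := ⟨1 + m, by omega, by rw [hper 1, h1]⟩
  obtain ⟨ht2, htf⟩ := Nat.find_spec hex
  have ht : SecondZeroAt ν (Nat.find hex) :=
    ⟨h0, h1, ht2, fun s hs2 hs => by simpa [hs2] using Nat.find_min hex hs, htf⟩
  have hle : Nat.find hex ≤ 1 + m := Nat.find_min' hex ⟨by omega, by rw [hper 1, h1]⟩
  exact (secondZeroAt_stefan (by omega)).lt ht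
    (Or.inr ⟨by omega, even_of_secondZeroAt hν ht hD⟩)

lemma iterate_double_stefan_apply_zero (j N : ℕ) : (double^[j] (stefan N)) 0 = true := by
  cases j with
  | zero => exact stefan_apply_zero N
  | succ j => simpa [Function.iterate_succ_apply'] using double_two_mul _ 0

lemma isLeastPeriod_iterate_double_stefan {N : ℕ} (hN : 0 < N) (j : ℕ) :
    IsLeastPeriod (2 ^ j * N) (double^[j] (stefan N)) := by
  induction j with
  | zero => simpa using isLeastPeriod_stefan hN
  | succ j ih =>
    rw [Function.iterate_succ_apply', pow_succ, mul_comm _ 2, mul_assoc]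
    exact ih.double (iterate_double_stefan_apply_zero j N)

lemma shiftLe_iterate_double_stefan {N : ℕ} (hN : 0 < N) (j : ℕ) :
    ShiftLe (double^[j] (stefan N)) (double^[j] (stefan N)) := by
  induction j with
  | zero => exact shiftLe_stefan hN
  | succ j ih =>
    rw [Function.iterate_succ_apply']
    exact ih.double (iterate_double_stefan_apply_zero j N)

lemma iterate_double_stefan_lt {ν : Itin} {m j N : ℕ} (hν : ShiftLe ν ν) (h0 : ν 0 = true)
    (h1 : ν 1 = false) (hper : Function.Periodic ν m) (hm : 0 < m) (hD : ∃ n, ν (2 * n) = false)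
    (hjN : j = 0 → m < N) : double^[j] (stefan N) < ν := by
  cases j with
  | zero => exact stefan_lt hν h0 h1 hper hm hD (hjN rfl)
  | succ j =>
    rw [Function.iterate_succ_apply']
    exact (double_lt_stefan _ (odd_two_mul_add_one m) (by omega)).trans
      (stefan_lt hν h0 h1 hper hm hD (by omega))

lemma exists_eq_double {ν : Itin} {m : ℕ} (hν : ShiftLe ν ν) (hper : IsLeastPeriod m ν)
    (h1 : ν 1 = false) (hD : ∀ n, ν (2 * n) = true) :
    ∃ μ r, ν = double μ ∧ m = 2 * r ∧ μ 0 = true ∧ ShiftLe μ μ ∧ IsLeastPeriod r μ := by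
  have hν' := double_undouble hD
  have hm : m % 2 = 0 := by
    by_contra hm
    have := hper.2.1 1
    rw [h1, show 1 + m = 2 * ((1 + m) / 2) by omega, hD] at this
    exact Bool.noConfusion this
  refine ⟨undouble ν, m / 2, hν'.symm, by omega, by simp [undouble, h1], ?_, ?_⟩
  · rw [← hν'] at hν
    exact hν.of_double
  · rw [← hν', show m = 2 * (m / 2) by omega] at hper
    exact hper.of_double

/-! ### Sharkovskii's theorem for itineraries -/

theorem exists_shiftLe_of_sharkGt {m : ℕ} {ν : Itin} (hν : ShiftLe ν ν) (hper : IsLeastPeriod m ν)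
    {k : ℕ} (hk : sharkGt m k) : ∃ ζ, IsLeastPeriod k ζ ∧ ζ 0 = true ∧ ShiftLe ζ ν := by
  induction m using Nat.strong_induction_on generalizing ν k with
  | _ m ih =>
  have hm : 2 ≤ m := by
    have : m ≠ 1 := by rintro rfl; exact not_sharkGt_one k hk
    have := hper.1
    omega
  obtain ⟨h0, h1⟩ := head_of_shiftLe_self hν (hper.2.2 1 one_pos hm)
  by_cases hk1 : k = 1
  · subst hk1
    refine ⟨stefan 1, isLeastPeriod_stefan one_pos, stefan_apply_zero 1,
      (shiftLe_stefan one_pos).trans_le (lt_of_head h0 h1 (Or.inr ?_)).le⟩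
    simp [stefan]
  by_cases hD : ∀ n, ν (2 * n) = true
  · obtain ⟨μ, r, rfl, rfl, hμ0, hμ, hμper⟩ := exists_eq_double hν hper h1 hD
    obtain ⟨hke, hk'⟩ := hk.half (even_two_mul r) hk1
    obtain ⟨ζ, hζ, hζ0, hζμ⟩ := ih r (by omega) hμ hμper (by simpa using hk')
    refine ⟨double ζ, ?_, by simpa using double_two_mul ζ 0, hζμ.double hμ0⟩
    rw [← Nat.two_mul_div_two_of_even hke]
    exact hζ.double hζ0
  · push Not at hD
    obtain ⟨_, _, j, q, -, rfl, -⟩ := id hk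
    refine ⟨double^[j] (stefan (2 * q + 1)), isLeastPeriod_iterate_double_stefan (by omega) j,
      iterate_double_stefan_apply_zero j _, (shiftLe_iterate_double_stefan (by omega) j).trans_le
        (iterate_double_stefan_lt hν h0 h1 hper.2.1 hper.1 (by simpa using hD) fun hj => ?_).le⟩
    subst hj
    simpa using hk.lt_of_odd (by simp) (by simpa using hk1)

end Itin

namespace Trapezoidal

open Itin Filter Topology

/-! ### Realizing itineraries by points -/

/-- The inverses of the two expanding pieces of `T_β`. -/
noncomputable def branch (β : ℝ) (b : Bool) (t : ℝ) : ℝ :=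
  if b then 1 / (β - 1) - t / β else t / β

noncomputable def approx (β : ℝ) : ℕ → Itin → ℝ → ℝ
  | 0, _, t => t
  | N + 1, e, t => branch β (e 0) (approx β N (drop 1 e) t)

/-- The point of `I_β` with itinerary `e`, when `e` is admissible. -/
noncomputable def point (β : ℝ) (e : Itin) : ℝ := limUnder atTop fun N => approx β N e 0

section

variable {β : ℝ}

lemma branch_mem_Iset (hβ : 1 < β) (b : Bool) {t : ℝ} (ht : t ∈ Iset β) :
    branch β b t ∈ Iset β := by
  obtain ⟨ht0, ht1⟩ := ht
  have hβ0 : 0 < β := by linarith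
  have : t / β ≤ 1 / (β - 1) := (div_le_self ht0 hβ.le).trans ht1
  have : 0 ≤ t / β := by positivity
  cases b <;> simp only [branch, Bool.false_eq_true, if_false, if_true] <;> constructor <;> linarith

lemma dist_branch (hβ : 1 < β) (b : Bool) (s t : ℝ) :
    dist (branch β b s) (branch β b t) = dist s t / β := by
  have hβ0 : 0 < β := by linarith
  cases b <;> simp only [branch, Bool.false_eq_true, if_false, if_true, Real.dist_eq]
  · rw [← sub_div, abs_div, abs_of_pos hβ0]
  · rw [sub_sub_sub_cancel_left, ← sub_div, abs_div, abs_of_pos hβ0, abs_sub_comm]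

lemma continuous_branch (β : ℝ) (b : Bool) : Continuous (branch β b) := by
  show Continuous fun t => branch β b t
  cases b <;> simp only [branch, Bool.false_eq_true, if_false, if_true] <;> fun_prop

lemma approx_mem_Iset (hβ : 1 < β) (N : ℕ) (e : Itin) {t : ℝ} (ht : t ∈ Iset β) :
    approx β N e t ∈ Iset β := by
  induction N generalizing e with
  | zero => exact ht
  | succ N ih => exact branch_mem_Iset hβ _ (ih _)

lemma dist_approx (hβ : 1 < β) (N : ℕ) (e : Itin) (s t : ℝ) :
    dist (approx β N e s) (approx β N e t) = dist s t / β ^ N := by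
  induction N generalizing e with
  | zero => simp [approx]
  | succ N ih => rw [approx, approx, dist_branch hβ, ih, pow_succ, div_div]

lemma approx_succ' (N : ℕ) (e : Itin) (t : ℝ) :
    approx β (N + 1) e t = approx β N e (branch β (e N) t) := by
  induction N generalizing e with
  | zero => rfl
  | succ N ih => rw [approx, ih, approx]; rfl

lemma dist_approx_le (hβ : 1 < β) (N : ℕ) (e : Itin) {s t : ℝ} (hs : s ∈ Iset β)
    (ht : t ∈ Iset β) : dist (approx β N e s) (approx β N e t) ≤ 1 / (β - 1) * (1 / β) ^ N := by
  rw [dist_approx hβ, one_div_pow, ← div_eq_mul_one_div]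
  have := Real.dist_le_of_mem_Icc hs ht
  gcongr
  linarith

lemma zero_mem_Iset (hβ : 1 < β) : (0 : ℝ) ∈ Iset β :=
  ⟨le_rfl, by have : 0 < β - 1 := by linarith
              positivity⟩

lemma tendsto_approx_point (hβ : 1 < β) (e : Itin) :
    Tendsto (fun N => approx β N e 0) atTop (𝓝 (point β e)) := by
  refine CauchySeq.tendsto_limUnder (cauchySeq_of_le_geometric (1 / β) (1 / (β - 1)) ?_ fun N => ?_)
  · rw [div_lt_one (by linarith)]; exact hβ
  · rw [approx_succ']
    exact dist_approx_le hβ N e (zero_mem_Iset hβ) (branch_mem_Iset hβ _ (zero_mem_Iset hβ))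

lemma point_mem_Iset (hβ : 1 < β) (e : Itin) : point β e ∈ Iset β :=
  isClosed_Icc.mem_of_tendsto (tendsto_approx_point hβ e)
    (Eventually.of_forall fun N => approx_mem_Iset hβ N e (zero_mem_Iset hβ))

lemma point_eq_branch (hβ : 1 < β) (e : Itin) :
    point β e = branch β (e 0) (point β (drop 1 e)) :=
  tendsto_nhds_unique ((tendsto_approx_point hβ e).comp (tendsto_add_atTop_nat 1))
    ((continuous_branch β _).continuousAt.tendsto.comp (tendsto_approx_point hβ (drop 1 e)))

/-- The branches contract by `1 / β`, so a bounded sequence following them is determined by `e`. -/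
lemma eq_point_of_eq_branch (hβ : 1 < β) {e : Itin} {x : ℕ → ℝ} (hx : ∀ n, x n ∈ Iset β)
    (hrec : ∀ n, x n = branch β (e n) (x (n + 1))) : x 0 = point β e := by
  have hpull : ∀ N, x 0 = approx β N e (x N) := fun N => by
    induction N with
    | zero => rfl
    | succ N ih => rw [approx_succ', ← hrec, ih]
  have hgeom : Tendsto (fun N : ℕ => 1 / (β - 1) * (1 / β) ^ N) atTop (𝓝 0) := by
    rw [← mul_zero (1 / (β - 1))]
    refine (tendsto_pow_atTop_nhds_zero_of_lt_one (by positivity) ?_).const_mul _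
    rw [div_lt_one (by linarith)]; exact hβ
  refine tendsto_nhds_unique ?_ (tendsto_approx_point hβ e)
  rw [tendsto_iff_dist_tendsto_zero]
  refine squeeze_zero (fun _ => dist_nonneg) (fun N => ?_) hgeom
  rw [dist_comm, hpull N]
  exact dist_approx_le hβ N e (hx N) (zero_mem_Iset hβ)

lemma point_sub_point (hβ : 1 < β) {a b : Itin} {t : ℕ} (h : ∀ s < t, a s = b s) :
    point β a - point β b =
      (if parity a t then -1 else 1) / β ^ t * (point β (drop t a) - point β (drop t b)) := by
  induction t with
  | zero => simp [parity]
  | succ t ih =>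
    rw [ih fun s hs => h s (by omega), point_eq_branch hβ (drop t a),
      point_eq_branch hβ (drop t b)]
    simp only [drop_apply, zero_add, drop_drop, h t (by omega), parity]
    have : β ≠ 0 := by positivity
    cases parity a t <;> cases b t <;> simp [branch] <;> field_simp <;> ring

lemma point_le_of_head_false (hβ : 1 < β) {e : Itin} (he : e 0 = false) :
    point β e ≤ 1 / (β * (β - 1)) := by
  rw [point_eq_branch hβ, he, branch, if_neg Bool.false_ne_true, mul_comm, ← div_div]
  gcongr
  exact (point_mem_Iset hβ _).2

lemma le_point_of_head_true (hβ : 1 < β) {e : Itin} (he : e 0 = true) : 1 / β ≤ point β e := by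
  rw [point_eq_branch hβ, he, branch, if_pos rfl]
  have : point β (drop 1 e) / β ≤ 1 / (β - 1) / β := by
    gcongr
    exact (point_mem_Iset hβ _).2
  have : 1 / (β - 1) - 1 / (β - 1) / β = 1 / β := by
    have : β - 1 ≠ 0 := by linarith
    field_simp
  linarith

/-- The orbit of `point β e` stays in `[0, 1)`; this is what keeps it off `C`. -/
def Admissible (β : ℝ) (e : Itin) : Prop := ∀ n, point β (drop n e) < 1

lemma Admissible.drop {e : Itin} (h : Admissible β e) (n : ℕ) : Admissible β (drop n e) :=
  fun j => by simpa using h (n + j)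

lemma point_lt_of_head_false (hβ : 1 < β) {e : Itin} (hA : Admissible β e) (he : e 0 = false) :
    point β e < 1 / β := by
  rw [point_eq_branch hβ, he, branch, if_neg Bool.false_ne_true]
  exact div_lt_div_of_pos_right (hA 1) (by positivity)

lemma lt_point_of_head_true (hβ : 1 < β) {e : Itin} (hA : Admissible β e) (he : e 0 = true) :
    1 / (β * (β - 1)) < point β e := by
  rw [point_eq_branch hβ, he, branch, if_pos rfl]
  have : point β (drop 1 e) / β < 1 / β := div_lt_div_of_pos_right (hA 1) (by positivity)
  have : 1 / (β - 1) - 1 / β = 1 / (β * (β - 1)) := by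
    have : β - 1 ≠ 0 := by linarith
    field_simp
    ring
  linarith

lemma point_lt_point (hβ : 1 < β) {a b : Itin} (hb : Admissible β b) (h : a < b) :
    point β a < point β b := by
  obtain ⟨t, hagree, hne, hpar⟩ := lt_iff.1 h
  have hb' := hb.drop t
  have ha0 : drop t a 0 = a t := by simp
  have hb0 : drop t b 0 = !a t := by cases hat : a t <;> simpa [hat] using hne.symm
  rw [← sub_neg, point_sub_point hβ hagree, ← hpar]
  cases hat : a t <;> rw [hat] at ha0 hb0
  · have ha := point_le_of_head_false hβ ha0
    have hb := lt_point_of_head_true hβ hb' hb0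
    rw [if_neg Bool.false_ne_true]
    exact mul_neg_of_pos_of_neg (by positivity) (by linarith)
  · have ha := le_point_of_head_true hβ ha0
    have hb := point_lt_of_head_false hβ hb' hb0
    rw [if_pos rfl]
    exact mul_neg_of_neg_of_pos (div_neg_of_neg_of_pos (by norm_num) (by positivity))
      (by linarith)

lemma point_le_point (hβ : 1 < β) {a b : Itin} (hb : Admissible β b) (h : a ≤ b) :
    point β a ≤ point β b := by
  rcases h.lt_or_eq with h | rfl
  · exact (point_lt_point hβ hb h).le
  · exact le_rfl

lemma point_injOn (hβ : 1 < β) : Set.InjOn (point β) {e | Admissible β e} := by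
  intro a ha b hb hab
  by_contra hne
  rcases lt_or_gt_of_ne hne with h | h
  · exact (point_lt_point hβ hb h).ne hab
  · exact (point_lt_point hβ ha h).ne' hab

lemma shiftLe_self_of_point_le (hβ : 1 < β) {ν : Itin} (hA : Admissible β ν)
    (h : ∀ n, point β (drop n ν) ≤ point β ν) : ShiftLe ν ν := fun n =>
  not_lt.1 fun hlt => (point_lt_point hβ (hA.drop n) hlt).not_ge (h n)

lemma one_div_mul_sub_one (β : ℝ) : 1 / (β * (β - 1)) = 1 / (β - 1) / β := by
  rw [div_div, mul_comm]

lemma point_notMem_Cset (hβ : 1 < β) {e : Itin} (hA : Admissible β e) :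
    point β e ∉ Cset β := fun ⟨hl, hr⟩ => by
  cases he : e 0
  · exact (point_lt_of_head_false hβ hA he).not_ge hl
  · exact (lt_point_of_head_true hβ hA he).not_ge hr

lemma Tmap_point (hβ : 1 < β) {e : Itin} (hA : Admissible β e) :
    Tmap β (point β e) = point β (drop 1 e) := by
  have hβ0 : β ≠ 0 := by positivity
  have hβ1 : β - 1 ≠ 0 := by linarith
  unfold Tmap
  cases he : e 0
  · rw [if_pos (point_lt_of_head_false hβ hA he), point_eq_branch hβ e, he, branch,
      if_neg Bool.false_ne_true]
    field_simp
  · rw [if_neg (le_point_of_head_true hβ he).not_gt, if_neg (lt_point_of_head_true hβ hA he).not_ge,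
      point_eq_branch hβ e, he, branch, if_pos rfl]
    field_simp
    ring

lemma iterate_Tmap_point (hβ : 1 < β) {e : Itin} (hA : Admissible β e) (j : ℕ) :
    (Tmap β)^[j] (point β e) = point β (drop j e) := by
  induction j generalizing e with
  | zero => rfl
  | succ j ih =>
    rw [Function.iterate_succ_apply, Tmap_point hβ hA, ih (hA.drop 1), drop_drop, add_comm]

lemma div_sub_one_eq_one_add (hβ : β ≠ 1) : β / (β - 1) = 1 + 1 / (β - 1) := by
  have : β - 1 ≠ 0 := sub_ne_zero.2 hβ
  field_simp
  ring

lemma Tmap_lt_one (hβ : 1 < β) {x : ℝ} (hx : x ∉ Cset β) : Tmap β x < 1 := by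
  have hβ0 : 0 < β := by linarith
  unfold Tmap
  split_ifs with hl hr
  · linarith [(lt_div_iff₀' hβ0).1 hl]
  · exact absurd ⟨not_lt.1 hl, hr⟩ hx
  · rw [not_le, one_div_mul_sub_one, div_lt_iff₀' hβ0] at hr
    linarith [div_sub_one_eq_one_add hβ.ne']

lemma mapsTo_Tmap (hβ : 1 < β) (hβ2 : β < 2) : Set.MapsTo (Tmap β) (Iset β) (Iset β) := by
  intro x ⟨hx0, hx1⟩
  have hγ : 1 ≤ 1 / (β - 1) := by rw [le_div_iff₀ (by linarith)]; linarith
  have hle : Tmap β x ≤ 1 := by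
    by_cases hC : x ∈ Cset β
    · unfold Tmap
      rw [if_neg (not_lt.2 hC.1), if_pos hC.2]
    · exact (Tmap_lt_one hβ hC).le
  refine ⟨?_, hle.trans hγ⟩
  unfold Tmap
  split_ifs
  · have : 0 < β := by linarith
    positivity
  · exact zero_le_one
  · have : β * x ≤ β / (β - 1) := by rw [← mul_one_div]; gcongr
    linarith

lemma eq_branch_Tmap (hβ : 1 < β) {x : ℝ} (hx : x ∉ Cset β) :
    x = branch β (decide (1 / β ≤ x)) (Tmap β x) := by
  have hβ0 : β ≠ 0 := by positivity
  have hβ1 : β - 1 ≠ 0 := by linarith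
  unfold Tmap
  by_cases hl : x < 1 / β
  · rw [if_pos hl, decide_eq_false (not_le.2 hl), branch, if_neg Bool.false_ne_true]
    field_simp
  · have hr : ¬ x ≤ 1 / (β * (β - 1)) := fun hr => hx ⟨not_lt.1 hl, hr⟩
    rw [if_neg hl, if_neg hr, decide_eq_true (not_lt.1 hl), branch, if_pos rfl]
    field_simp
    ring

noncomputable def itinerary (β x : ℝ) : Itin := fun n => decide (1 / β ≤ (Tmap β)^[n] x)

lemma itinerary_iterate (n : ℕ) (x : ℝ) :
    itinerary β ((Tmap β)^[n] x) = drop n (itinerary β x) := by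
  funext j
  simp only [itinerary, drop_apply, Function.iterate_add_apply]

lemma point_itinerary (hβ : 1 < β) (hβ2 : β < 2) {x : ℝ} (hx : x ∈ Iset β)
    (hC : ∀ n, (Tmap β)^[n] x ∉ Cset β) : point β (itinerary β x) = x :=
  (eq_point_of_eq_branch hβ (x := fun n => (Tmap β)^[n] x)
    (fun n => (mapsTo_Tmap hβ hβ2).iterate n hx) fun n => by
      rw [Function.iterate_succ_apply']
      exact eq_branch_Tmap hβ (hC n)).symm

/-- The itinerary of the largest point of a cycle avoiding `C` is shift-maximal. -/
lemma exists_itinerary_of_cycle (hβ : 1 < β) (hβ2 : β < 2) {m : ℕ} {x : ℝ} (hm : 0 < m)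
    (hx : x ∈ Iset β) (hfix : (Tmap β)^[m] x = x)
    (hmin : ∀ j, 1 ≤ j → j < m → (Tmap β)^[j] x ≠ x)
    (hC : ∀ j, j < m → (Tmap β)^[j] x ∉ Cset β) :
    ∃ ν, Admissible β ν ∧ IsLeastPeriod m ν ∧ ShiftLe ν ν := by
  have hmod : ∀ n, (Tmap β)^[n] x = (Tmap β)^[n % m] x := fun n =>
    (Function.IsPeriodicPt.iterate_mod_apply hfix n).symm
  have hCall : ∀ n, (Tmap β)^[n] x ∉ Cset β := fun n => hmod n ▸ hC _ (Nat.mod_lt n hm)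
  set e := itinerary β x
  have horbit : ∀ n, point β (drop n e) = (Tmap β)^[n] x := fun n => by
    rw [← itinerary_iterate, point_itinerary hβ hβ2 ((mapsTo_Tmap hβ hβ2).iterate n hx) fun j => by
      rw [← Function.iterate_add_apply]; exact hCall _]
  have hadm : Admissible β e := fun n => by
    rw [horbit, hmod, ← Nat.add_mod_right, show n + m = (n + m - 1) + 1 by omega, ← hmod,
      Function.iterate_succ_apply']
    exact Tmap_lt_one hβ (hCall _)
  have hper : IsLeastPeriod m e := by
    refine ⟨hm, fun n => ?_, fun s hs hsm hs' => hmin s hs hsm ?_⟩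
    · simp only [e, itinerary, Function.iterate_add_apply, hfix]
    · rw [← horbit, drop_eq_self_iff.2 hs', ← drop_zero e, horbit, Function.iterate_zero_apply]
  obtain ⟨n₀, -, hmax⟩ := (Finset.range m).exists_max_image (fun n => (Tmap β)^[n] x)
    ⟨0, Finset.mem_range.2 hm⟩
  refine ⟨drop n₀ e, hadm.drop n₀, hper.drop n₀, shiftLe_self_of_point_le hβ (hadm.drop n₀)
    fun n => ?_⟩
  rw [drop_drop, horbit, horbit, hmod]
  exact hmax _ (Finset.mem_range.2 (Nat.mod_lt _ hm))

lemma exists_cycle_of_shiftLe (hβ : 1 < β) {ν ζ : Itin} {k : ℕ} (hν : Admissible β ν)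
    (hζν : ShiftLe ζ ν) (hζ : IsLeastPeriod k ζ) :
    ∃ y ∈ Iset β, (Tmap β)^[k] y = y ∧ (∀ j, 1 ≤ j → j < k → (Tmap β)^[j] y ≠ y) ∧
      ∀ j, j < k → (Tmap β)^[j] y ∉ Cset β := by
  have hζA : Admissible β ζ := fun n => (point_le_point hβ hν (hζν n)).trans_lt (hν 0)
  have hiff : ∀ j, (Tmap β)^[j] (point β ζ) = point β ζ ↔ Function.Periodic ζ j := fun j => by
    rw [iterate_Tmap_point hβ hζA, ← drop_eq_self_iff]
    exact (point_injOn hβ).eq_iff (hζA.drop j) hζA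
  refine ⟨point β ζ, point_mem_Iset hβ ζ, (hiff k).2 hζ.2.1,
    fun j hj hjk h => hζ.2.2 j hj hjk ((hiff j).1 h), fun j _ => ?_⟩
  rw [iterate_Tmap_point hβ hζA]
  exact point_notMem_Cset hβ (hζA.drop j)

end

end Trapezoidal

open Itin Trapezoidal in
theorem stmt18_general (β : ℝ) (hβ : β ∈ Set.Ioo (1 : ℝ) 2) (m : ℕ)
    (x : ℝ) (hx : x ∈ Iset β)
    (hfix : (Tmap β)^[m] x = x) (hmin : ∀ j, 1 ≤ j → j < m → (Tmap β)^[j] x ≠ x)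
    (hC : ∀ j, j < m → (Tmap β)^[j] x ∉ Cset β) :
    ∀ k, sharkGt m k → ∃ y ∈ Iset β, (Tmap β)^[k] y = y ∧
      (∀ j, 1 ≤ j → j < k → (Tmap β)^[j] y ≠ y) ∧
      ∀ j, j < k → (Tmap β)^[j] y ∉ Cset β := by
  intro k hk
  obtain ⟨ν, hadm, hper, hν⟩ := exists_itinerary_of_cycle hβ.1 hβ.2 hk.pos_left hx hfix hmin hC
  obtain ⟨ζ, hζ, -, hζν⟩ := exists_shiftLe_of_sharkGt hν hper hk
  exact exists_cycle_of_shiftLe hβ.1 hadm hζν hζ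

/-- Sharkovskii's theorem for L-R cycles of the trapezoidal map: if T_β has an
L-R m-cycle, then it has an L-R k-cycle for any k with m ▷ k. -/
theorem stmt18 (β : ℝ) (hβ : β ∈ Set.Ioo (1 : ℝ) 2) (m : ℕ) (hm : 1 ≤ m)
    (x : ℝ) (hx : x ∈ Iset β)
    (hfix : (Tmap β)^[m] x = x) (hmin : ∀ j, 1 ≤ j → j < m → (Tmap β)^[j] x ≠ x)
    (hC : ∀ j, j < m → (Tmap β)^[j] x ∉ Cset β) :
    ∀ k, sharkGt m k → ∃ y ∈ Iset β, (Tmap β)^[k] y = y ∧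
      (∀ j, 1 ≤ j → j < k → (Tmap β)^[j] y ≠ y) ∧
      ∀ j, j < k → (Tmap β)^[j] y ∉ Cset β :=
  stmt18_general β hβ m x hx hfix hmin hC
end

section
/- Let k > 1 and let ε ∈ Γ be periodic with smallest period 2k and of the form ε = (v v̄)^∞ for a word v of length k; equivalently, σ^k(ε) = ε̄ and ε has smallest period 2k. Then there exists a sequence ε' ∈ Γ that is periodic with smallest period k and satisfies ε' ≺ ε. -/
/-- The set Γ = {ε ∈ Σ : ε̄ ⪯ σ^k(ε) ⪯ ε for all k ≥ 0}. -/
def Gamma (ε : ℕ → ℕ) : Prop :=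
  isSeq ε ∧ ∀ k, lexLe (mirror ε) (shift^[k] ε) ∧ lexLe (shift^[k] ε) ε

lemma shift_iterate (a : ℕ → ℕ) (m : ℕ) : shift^[m] a = fun n => a (n + m) := by
  induction m with
  | zero => rfl
  | succ m ih =>
    funext n
    rw [Function.iterate_succ_apply', ih]
    show a (n + 1 + m) = a (n + (m+1))
    ring_nf

lemma lexLe_iff (a b : ℕ → ℕ) :
    lexLe a b ↔ ∀ n, (∀ i, i < n → a i = b i) → a n ≤ b n := by
  constructor
  · rintro (⟨m, hpre, hlt⟩ | rfl) n hn
    · rcases lt_trichotomy n m with h | h | h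
      · exact (hpre n h).le
      · exact h ▸ hlt.le
      · exact absurd (hn m h) hlt.ne
    · exact le_rfl
  · intro h
    by_cases hab : a = b
    · exact Or.inr hab
    · left
      have hne : ∃ n, a n ≠ b n := by
        by_contra hc; push_neg at hc; exact hab (funext hc)
      refine ⟨Nat.find hne, fun j hj => not_ne_iff.mp (Nat.find_min hne hj), ?_⟩
      exact lt_of_le_of_ne (h _ fun i hi => not_ne_iff.mp (Nat.find_min hne hi))
        (Nat.find_spec hne)

/-- If ε ∈ Γ has smallest period 2k (k > 1) and is of the form (v v̄)^∞, i.e.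
σ^k(ε) = ε̄, then there is ε' ∈ Γ of smallest period k with ε' ≺ ε. -/
theorem stmt19 (k : ℕ) (hk : 1 < k) (ε : ℕ → ℕ) (hΓ : Gamma ε)
    (hper : periodicSmallest (2 * k) ε) (hmir : shift^[k] ε = mirror ε) :
    ∃ ε', Gamma ε' ∧ periodicSmallest k ε' ∧ lexLt ε' ε := by
  obtain ⟨hval, hG⟩ := hΓ
  obtain ⟨-, hper2k, hmin⟩ := hper
  -- basic facts about ε
  have hm : ∀ n, ε (n + k) = 1 - ε n := by
    intro n
    have := congrFun hmir n
    rw [shift_iterate] at this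
    exact this
  have hp : ∀ n, ε (n + 2 * k) = ε n := by
    intro n
    have := congrFun hper2k n
    rw [shift_iterate] at this
    exact this
  have hA : ∀ j n, (∀ i, i < n → ε (i + j) = ε i) → ε (n + j) ≤ ε n := by
    intro j n hpre
    have h := (lexLe_iff _ _).mp (hG j).2 n
    rw [shift_iterate] at h
    exact h hpre
  have hB : ∀ j n, (∀ i, i < n → 1 - ε i = ε (i + j)) → 1 - ε n ≤ ε (n + j) := by
    intro j n hpre
    have h := (lexLe_iff _ _).mp (hG j).1 n
    rw [shift_iterate] at h
    exact h hpre
  have hnotp : ∀ c, 1 ≤ c → c < 2 * k → ∃ n, ε (n + c) ≠ ε n := by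
    intro c h1 h2
    by_contra hc; push_neg at hc
    exact hmin c h1 h2 (by funext n; rw [shift_iterate]; exact hc n)
  -- the key combinatorial lemma
  have key : ∀ j, 1 ≤ j → j < k → ¬ (∀ i, i < k - j → 1 - ε i = ε (i + j)) := by
    intro j hj1 hjk H
    have hex : ∃ p, 1 - ε p ≠ ε (p + j) := by
      by_contra hall; push_neg at hall
      have hCper : ∀ q, ε (q + (k - j)) = ε q := by
        intro q
        have h1 : ∀ r, ε (r + j + (k - j)) = ε (r + j) := by
          intro r
          have e1 : r + j + (k - j) = r + k := by omega
          rw [e1, hm r, hall r]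
        have e1 : ε (q + (k - j)) = ε (q + (k - j) + 2 * k) := (hp _).symm
        have e2 : q + (k - j) + 2 * k = (q + 2 * k - j) + j + (k - j) := by omega
        have e3 : (q + 2 * k - j) + j = q + 2 * k := by omega
        rw [e1, e2, h1, e3, hp]
      obtain ⟨n, hn⟩ := hnotp (k - j) (by omega) (by omega)
      exact hn (hCper n)
    have hpmin : ∀ i, i < Nat.find hex → 1 - ε i = ε (i + j) :=
      fun i hi => not_ne_iff.mp (Nat.find_min hex hi)
    set p := Nat.find hex with hpdef
    have hpspec : 1 - ε p ≠ ε (p + j) := Nat.find_spec hex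
    have hpc : k - j ≤ p := by
      by_contra h
      exact hpspec (H p (by omega))
    have hBp : 1 - ε p ≤ ε (p + j) := hB j p hpmin
    have hep : ε p = 1 ∧ ε (p + j) = 1 := by
      have := hval p; have := hval (p + j); omega
    have hepc : ε (p - (k - j)) = 0 := by
      have e1 : p - (k - j) + k = p + j := by omega
      have := hm (p - (k - j))
      rw [e1] at this
      have := hval (p - (k - j)); omega
    have hpre : ∀ t, t < p - (k - j) → ε (t + (k - j)) = ε t := by
      intro t ht
      have h2 := hpmin (t + (k - j)) (by omega)
      have e1 : t + (k - j) + j = t + k := by omega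
      rw [e1, hm t] at h2
      have := hval t; have := hval (t + (k - j)); omega
    have := hA (k - j) (p - (k - j)) hpre
    rw [show p - (k - j) + (k - j) = p by omega] at this
    omega
  have e0 : ε 0 = 1 := by
    have h := (lexLe_iff _ _).mp (hG 0).1 0 (by omega)
    rw [shift_iterate] at h
    have h2 : 1 - ε 0 ≤ ε 0 := h
    have := hval 0; omega
  have ek1 : ε (k - 1) = 1 := by
    by_contra h
    apply key (k - 1) (by omega) (by omega)
    intro i hi
    have : i = 0 := by omega
    subst this
    have := hval (k - 1)
    simp [e0]
    omega
  -- the new sequence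
  obtain ⟨ε', e'def⟩ : ∃ f : ℕ → ℕ, ∀ n, f n = if n % k = k - 1 then 0 else ε (n % k) :=
    ⟨_, fun n => rfl⟩
  have hk0 : 0 < k := by omega
  have e'lt : ∀ n, n < k - 1 → ε' n = ε n := by
    intro n h
    rw [e'def, Nat.mod_eq_of_lt (by omega), if_neg (by omega)]
  have e'k1 : ∀ n, n % k = k - 1 → ε' n = 0 := by
    intro n h; rw [e'def, if_pos h]
  have e'val : ∀ n, ε' n ≤ 1 := by
    intro n; rw [e'def]; split
    · omega
    · exact hval _
  have e'mod : ∀ n, ε' n = ε' (n % k) := by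
    intro n; rw [e'def, e'def, Nat.mod_mod_of_dvd n dvd_rfl]
  have e'per : ∀ n, ε' (n + k) = ε' n := by
    intro n; rw [e'mod (n + k), Nat.add_mod_right, ← e'mod]
  -- ε maximality transferred: shift^[j] ε' ≠ ε' needs, for 1 ≤ j < k:
  have e'strict : ∀ j, 1 ≤ j → j < k → ¬ (∀ i, ε' (i + j) = ε' i) := by
    intro j h1 h2 hall
    have hd : ε (k - 1 - j) = 0 := by
      have := hall (k - 1 - j)
      rw [show k - 1 - j + j = k - 1 by omega] at this
      rw [e'k1 (k - 1) (Nat.mod_eq_of_lt (by omega)), e'lt (k - 1 - j) (by omega)] at this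
      omega
    have hpre : ∀ i, i < k - 1 - j → ε (i + j) = ε i := by
      intro i hi
      have := hall i
      rw [e'lt i (by omega), e'lt (i + j) (by omega)] at this
      exact this
    have := hA j (k - 1 - j) hpre
    rw [show k - 1 - j + j = k - 1 by omega, ek1] at this
    omega
  have e'permod : ∀ n j, ε' (n + j) = ε' (n + j % k) := by
    intro n j
    rw [e'mod (n + j), e'mod (n + j % k)]
    congr 1
    conv_lhs => rw [Nat.add_mod]
    conv_rhs => rw [Nat.add_mod, Nat.mod_mod_of_dvd j dvd_rfl]
  have e'shift : ∀ n m, ε' (n + m) = ε' (n % k + m) := by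
    intro n m
    rw [e'mod (n + m), e'mod (n % k + m)]
    congr 1
    conv_lhs => rw [Nat.add_mod]
    conv_rhs => rw [Nat.add_mod, Nat.mod_mod_of_dvd n dvd_rfl]
  have e'0 : ε' 0 = 1 := by rw [e'lt 0 (by omega), e0]
  refine ⟨ε', ⟨e'val, ?_⟩, ⟨by omega, ?_, ?_⟩, ?_⟩
  · -- the Gamma conditions
    intro j
    constructor
    · -- mirror ε' ⪯ shift^[j] ε'
      rw [lexLe_iff]
      intro n hn
      simp only [mirror, shift_iterate] at hn ⊢
      by_cases hj0 : j % k = 0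
      · rcases Nat.eq_zero_or_pos n with rfl | hn0
        · rw [e'permod 0 j, hj0, e'0]
          omega
        · have h0 := hn 0 hn0
          rw [e'permod 0 j, hj0, e'0] at h0
          omega
      · have hj' : j % k < k := Nat.mod_lt _ hk0
        rcases Nat.lt_or_ge n k with hnk | hnk
        · rcases lt_trichotomy n (k - 1 - j % k) with h1 | h1 | h1
          · rw [e'permod n j, e'lt (n + j % k) (by omega), e'lt n (by omega)]
            refine hB (j % k) n fun i hi => ?_
            have h2 := hn i hi
            rw [e'permod i j, e'lt (i + j % k) (by omega), e'lt i (by omega)] at h2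
            exact h2
          · -- n = k - 1 - j % k
            rw [e'permod n j,
              e'k1 (n + j % k) (by rw [Nat.mod_eq_of_lt (by omega)]; omega),
              e'lt n (by omega)]
            have hεd : ε n = 1 := by
              by_contra hc
              have hc0 : ε n = 0 := by have := hval n; omega
              apply key (j % k) (by omega) hj'
              intro i hi
              rcases Nat.lt_or_ge i n with hid | hid
              · have h2 := hn i (by omega)
                rw [e'permod i j, e'lt (i + j % k) (by omega), e'lt i (by omega)] at h2
                exact h2
              · have : i = n := by omega
                subst this
                rw [hc0, show i + j % k = k - 1 by omega, ek1]
            rw [hεd]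
          · rcases lt_trichotomy n (k - 1) with h2 | h2 | h2
            · -- k - 1 - j % k < n < k - 1
              rw [e'permod n j]
              have em : (n + j % k) % k = n - (k - j % k) := by
                rw [Nat.mod_eq_sub_mod (by omega), Nat.mod_eq_of_lt (by omega)]
                omega
              have hs : ε' (n + j % k) = ε (n - (k - j % k)) := by
                rw [e'mod, em, e'lt _ (by omega)]
              rw [hs, e'lt n (by omega)]
              have hpre : ∀ t, t < n - (k - j % k) → 1 - ε t = ε (t + (k - j % k)) := by
                intro t ht
                have h3 := hn (t + (k - j % k)) (by omega)
                rw [e'permod _ j, e'lt _ (by omega),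
                  show t + (k - j % k) + j % k = t + k by omega, e'per t,
                  e'lt t (by omega)] at h3
                have := hval t; have := hval (t + (k - j % k)); omega
              have h4 := hB (k - j % k) (n - (k - j % k)) hpre
              rw [show n - (k - j % k) + (k - j % k) = n by omega] at h4
              have := hval n; have := hval (n - (k - j % k)); omega
            · -- n = k - 1
              rw [e'permod n j, e'k1 n (by rw [Nat.mod_eq_of_lt (by omega)]; omega)]
              have em : (n + j % k) % k = j % k - 1 := by
                rw [Nat.mod_eq_sub_mod (by omega), Nat.mod_eq_of_lt (by omega)]
                omega
              have hs : ε' (n + j % k) = ε (j % k - 1) := by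
                rw [e'mod, em, e'lt _ (by omega)]
              rw [hs]
              have hres : ε (j % k - 1) = 1 := by
                by_contra hc
                have hc0 : ε (j % k - 1) = 0 := by have := hval (j % k - 1); omega
                apply key (k - j % k) (by omega) (by omega)
                intro t ht
                rcases Nat.lt_or_ge t (j % k - 1) with htl | htl
                · have h3 := hn (t + (k - j % k)) (by omega)
                  rw [e'permod _ j, e'lt _ (by omega),
                    show t + (k - j % k) + j % k = t + k by omega, e'per t,
                    e'lt t (by omega)] at h3
                  have := hval t; have := hval (t + (k - j % k)); omega
                · obtain rfl : t = j % k - 1 := by omega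
                  rw [hc0, show j % k - 1 + (k - j % k) = k - 1 by omega, ek1]
              rw [hres]
            · omega
        · -- n ≥ k: periodicity
          have hr := hn (n % k) (lt_of_lt_of_le (Nat.mod_lt _ hk0) hnk)
          rw [e'shift n j, e'mod n]
          omega
    · -- shift^[j] ε' ⪯ ε'
      rw [lexLe_iff]
      intro n hn
      simp only [shift_iterate] at hn ⊢
      by_cases hj0 : j % k = 0
      · rw [e'permod n j, hj0, Nat.add_zero]
      · have hj' : j % k < k := Nat.mod_lt _ hk0
        rcases Nat.lt_or_ge n k with hnk | hnk
        · rcases lt_trichotomy n (k - 1 - j % k) with h1 | h1 | h1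
          · rw [e'permod n j, e'lt (n + j % k) (by omega), e'lt n (by omega)]
            refine hA (j % k) n fun i hi => ?_
            have h2 := hn i hi
            rw [e'permod i j, e'lt (i + j % k) (by omega), e'lt i (by omega)] at h2
            exact h2
          · rw [e'permod n j,
              e'k1 (n + j % k) (by rw [Nat.mod_eq_of_lt (by omega)]; omega)]
            exact Nat.zero_le _
          · -- k - 1 - j % k < n < k: contradiction
            have h0 := hn (k - 1 - j % k) h1
            rw [e'permod _ j,
              e'k1 (k - 1 - j % k + j % k) (by rw [Nat.mod_eq_of_lt (by omega)]; omega),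
              e'lt (k - 1 - j % k) (by omega)] at h0
            have hpre : ∀ i, i < k - 1 - j % k → ε (i + j % k) = ε i := by
              intro i hi
              have h2 := hn i (by omega)
              rw [e'permod i j, e'lt (i + j % k) (by omega), e'lt i (by omega)] at h2
              exact h2
            have h3 := hA (j % k) (k - 1 - j % k) hpre
            rw [show k - 1 - j % k + j % k = k - 1 by omega, ek1] at h3
            omega
        · have hr := hn (n % k) (lt_of_lt_of_le (Nat.mod_lt _ hk0) hnk)
          rw [e'shift n j, e'mod n]
          omega
  · -- period k
    funext n
    rw [shift_iterate]
    exact e'per n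
  · -- smallest period
    intro j h1 h2 heq
    apply e'strict j h1 h2
    intro i
    have := congrFun heq i
    rw [shift_iterate] at this
    exact this
  · -- ε' ≺ ε
    refine ⟨k - 1, fun i hi => e'lt i hi, ?_⟩
    rw [e'k1 (k - 1) (Nat.mod_eq_of_lt (by omega)), ek1]
    omega
end
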